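/- arXiv:2511.21293 — 8 statements merged into one kernel-verified Lean document; each statement's English description precedes it below -/
import Mathlib

section
/- Let G be a group, A an arbitrary group, H ≤ K ≤ G subgroups, and ψ : G → A a group homomorphism. If ψ restricted to H is injective and ψ(H) is a virtual retract of A, then H is a virtual retract of G. -/
/-- `H` is a virtual retract of `G`: there is a finite-index subgroup `K ≤ G` containing
`H` and a homomorphism `ρ : K → H` restricting to the identity on `H`. -/
def IsVirtualRetract {G : Type*} [Group G] (H : Subgroup G) : Prop :=
  ∃ (K : Subgroup G) (hHK : H ≤ K), K.FiniteIndex ∧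
    ∃ ρ : ↥K →* ↥H, ∀ (h : G) (hh : h ∈ H), (ρ ⟨h, hHK hh⟩ : G) = h

namespace Subgroup

variable {G A : Type*} [Group G] [Group A]

theorem FiniteIndex.comap {L : Subgroup A} (hL : L.FiniteIndex) (ψ : G →* A) :
    (L.comap ψ).FiniteIndex := by
  have h := relIndex_comap_ne_zero ψ (K := ⊤) (by rw [relIndex_top_right]; exact hL.index_ne_zero)
  rw [comap_top, relIndex_top_right] at h
  exact ⟨h⟩

noncomputable def equivMapOfInjOn (H : Subgroup G) (ψ : G →* A) (hinj : Set.InjOn ψ H) :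
    H ≃* H.map ψ :=
  MulEquiv.ofBijective (ψ.subgroupMap H)
    ⟨fun x y hxy => Subtype.ext (hinj x.2 y.2 (congrArg Subtype.val hxy)),
      ψ.subgroupMap_surjective H⟩

end Subgroup

theorem isVirtualRetract_of_map_general {G A : Type*} [Group G] [Group A]
    (H : Subgroup G) (ψ : G →* A)
    (hinj : Set.InjOn ψ (H : Set G)) (hvr : IsVirtualRetract (H.map ψ)) :
    IsVirtualRetract H := by
  obtain ⟨L, hHL, hL, ρ, hρ⟩ := hvr
  have hHL' : H ≤ L.comap ψ := Subgroup.map_le_iff_le_comap.mp hHL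
  let e := H.equivMapOfInjOn ψ hinj
  refine ⟨L.comap ψ, hHL', hL.comap ψ,
    e.symm.toMonoidHom.comp (ρ.comp (ψ.subgroupComap L)), fun h hh => ?_⟩
  have hρh : ρ (ψ.subgroupComap L ⟨h, hHL' hh⟩) = e ⟨h, hh⟩ :=
    Subtype.ext (hρ (ψ h) ⟨h, hh, rfl⟩)
  simp [hρh]

/-- If `ψ : G → A` is injective on `H` and `ψ(H)` is a virtual retract of `A`,
then `H` is a virtual retract of `G`. -/
theorem isVirtualRetract_of_map {G A : Type*} [Group G] [Group A]
    (H K : Subgroup G) (hHK : H ≤ K) (ψ : G →* A)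
    (hinj : Set.InjOn ψ (H : Set G)) (hvr : IsVirtualRetract (H.map ψ)) :
    IsVirtualRetract H :=
  isVirtualRetract_of_map_general H ψ hinj hvr
end

section
/- Let H, N₁, N₂ be a group with normal subgroups N₁, N₂ ◁ H satisfying N₁ ∩ N₂ = {1}, and let Q, R ≤ H both be complements to L := N₁N₂ in H (i.e. H = LQ, L ∩ Q = {1}, and similarly for R). Let αᵢ : H → H/Nᵢ be the quotient maps. If αᵢ(Q) is conjugate to αᵢ(R) in H/Nᵢ for each i = 1, 2, then there exists h ∈ L with Q = hRh⁻¹. -/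
/-!
Conjugating `R` by `x ∈ H ⧸ Nᵢ` can be replaced by conjugating by an element `lᵢ ∈ L`, since
`x` lifts to some `q l` with `q ∈ Q` and conjugation by `q` fixes `Q`. As `L = N₁N₂`, a single
`h ∈ L` agrees with `l₁` modulo `N₁` and with `l₂` modulo `N₂` (take the `N₁`-part of `l₂` and the
`N₂`-part of `l₁`), so `hRh⁻¹` and `Q` have the same images in both quotients. Two complements
of `L` with this property coincide: if `n₁q₁ = n₂q₂` with `nᵢ ∈ Nᵢ`, `qᵢ ∈ Q`, then
`n₂⁻¹n₁ = q₂q₁⁻¹ ∈ L ∩ Q = 1`, whence `n₁ = n₂ ∈ N₁ ∩ N₂ = 1`.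
-/

open Pointwise QuotientGroup

namespace Subgroup

variable {G : Type*} [Group G]

theorem map_map_conj {K : Type*} [Group K] (f : G →* K) (S : Subgroup G) (g : G) :
    (S.map (MulAut.conj g).toMonoidHom).map f
      = (S.map f).map (MulAut.conj (f g)).toMonoidHom := by
  simp only [map_map]
  congr 1
  ext
  simp

theorem map_conj_mul (S : Subgroup G) (a b : G) :
    S.map (MulAut.conj (a * b)).toMonoidHom
      = (S.map (MulAut.conj b).toMonoidHom).map (MulAut.conj a).toMonoidHom := by
  rw [map_map]
  congr 1
  ext
  simp [mul_assoc]

theorem map_conj_of_mem {S : Subgroup G} {g : G} (hg : g ∈ S) :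
    S.map (MulAut.conj g).toMonoidHom = S :=
  mem_normalizer_iff_map_conj_eq.mp (le_normalizer hg)

theorem map_mk'_map_conj_congr {M : Subgroup G} [M.Normal] (S : Subgroup G) {g g' : G}
    (h : (g : G ⧸ M) = g') :
    (S.map (MulAut.conj g).toMonoidHom).map (mk' M)
      = (S.map (MulAut.conj g').toMonoidHom).map (mk' M) := by
  rw [map_map_conj, map_map_conj, mk'_apply, mk'_apply, h]

theorem exists_mem_map_mk'_map_conj_eq {L Q S : Subgroup G} (M : Subgroup G) [M.Normal]
    (hLQ : (L : Set G) * (Q : Set G) = Set.univ) {x : G ⧸ M}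
    (hx : (S.map (mk' M)).map (MulAut.conj x).toMonoidHom = Q.map (mk' M)) :
    ∃ l ∈ L, (S.map (MulAut.conj l).toMonoidHom).map (mk' M) = Q.map (mk' M) := by
  obtain ⟨g, rfl⟩ := mk'_surjective M x
  obtain ⟨l, hl, q, hq, hlq⟩ : g⁻¹ ∈ (L : Set G) * Q := hLQ ▸ Set.mem_univ _
  have hqg : q * g = l⁻¹ := by rw [← inv_inj, mul_inv_rev, inv_inv, ← hlq]; group
  refine ⟨l⁻¹, inv_mem hl, ?_⟩
  calc (S.map (MulAut.conj l⁻¹).toMonoidHom).map (mk' M)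
      = ((S.map (mk' M)).map (MulAut.conj (mk' M g)).toMonoidHom).map
          (MulAut.conj (mk' M q)).toMonoidHom := by
        rw [← hqg, map_conj_mul, map_map_conj, map_map_conj]
    _ = Q.map (mk' M) := by rw [hx, ← map_map_conj, map_conj_of_mem hq]

theorem exists_mem_sup_mk_eq_mk {N₁ N₂ : Subgroup G} [N₁.Normal] [N₂.Normal] {l₁ l₂ : G}
    (h₁ : l₁ ∈ N₁ ⊔ N₂) (h₂ : l₂ ∈ N₁ ⊔ N₂) :
    ∃ h ∈ N₁ ⊔ N₂, (h : G ⧸ N₁) = l₁ ∧ (h : G ⧸ N₂) = l₂ := by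
  obtain ⟨a₁, ha₁, b₁, hb₁, rfl⟩ := mem_sup_of_normal_right.mp h₁
  obtain ⟨a₂, ha₂, b₂, hb₂, rfl⟩ := mem_sup_of_normal_right.mp h₂
  refine ⟨a₂ * b₁, mul_mem_sup ha₂ hb₁, ?_, ?_⟩ <;>
    simp [(eq_one_iff _).mpr ha₁, (eq_one_iff _).mpr ha₂, (eq_one_iff _).mpr hb₁,
      (eq_one_iff _).mpr hb₂]

theorem sup_inf_sup_eq_self {N₁ N₂ Q : Subgroup G} [N₁.Normal] [N₂.Normal]
    (hN : N₁ ⊓ N₂ = ⊥) (hQ : (N₁ ⊔ N₂) ⊓ Q = ⊥) : (N₁ ⊔ Q) ⊓ (N₂ ⊔ Q) = Q := by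
  refine le_antisymm (fun t ht ↦ ?_) (le_inf le_sup_right le_sup_right)
  obtain ⟨n₁, hn₁, q₁, hq₁, rfl⟩ := mem_sup_of_normal_left.mp (mem_inf.mp ht).1
  obtain ⟨n₂, hn₂, q₂, hq₂, he⟩ := mem_sup_of_normal_left.mp (mem_inf.mp ht).2
  have hnq : n₂⁻¹ * n₁ = q₂ * q₁⁻¹ := by
    rw [inv_mul_eq_iff_eq_mul, ← mul_assoc, eq_mul_inv_iff_mul_eq, he]
  have hn : n₂⁻¹ * n₁ = 1 := by
    rw [← mem_bot, ← hQ, mem_inf]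
    exact ⟨mul_mem (mem_sup_right (inv_mem hn₂)) (mem_sup_left hn₁),
      hnq ▸ mul_mem hq₂ (inv_mem hq₁)⟩
  have hn₁' : n₁ = 1 := by
    rw [← mem_bot, ← hN]
    exact mem_inf.mpr ⟨hn₁, inv_mul_eq_one.mp hn ▸ hn₂⟩
  rwa [hn₁', one_mul]

theorem le_of_map_mk'_eq {N₁ N₂ Q T : Subgroup G} [N₁.Normal] [N₂.Normal]
    (hN : N₁ ⊓ N₂ = ⊥) (hQ : (N₁ ⊔ N₂) ⊓ Q = ⊥)
    (h₁ : T.map (mk' N₁) = Q.map (mk' N₁)) (h₂ : T.map (mk' N₂) = Q.map (mk' N₂)) : T ≤ Q :=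
  calc T ≤ (N₁ ⊔ T) ⊓ (N₂ ⊔ T) := le_inf le_sup_right le_sup_right
    _ = (N₁ ⊔ Q) ⊓ (N₂ ⊔ Q) := by rw [← comap_map_mk', ← comap_map_mk' N₂, h₁, h₂,
          comap_map_mk', comap_map_mk']
    _ = Q := sup_inf_sup_eq_self hN hQ

end Subgroup

open Subgroup

theorem complements_conj_of_conj_in_quotients_general (H : Type*) [Group H]
    (N₁ N₂ : Subgroup H) [N₁.Normal] [N₂.Normal] (hdisj : N₁ ⊓ N₂ = ⊥)
    (L : Subgroup H) (hL : (L : Set H) = (N₁ : Set H) * (N₂ : Set H))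
    (Q R : Subgroup H)
    (hQmeet : L ⊓ Q = ⊥) (hQprod : (L : Set H) * (Q : Set H) = Set.univ)
    (hRmeet : L ⊓ R = ⊥)
    (hconj1 : ∃ x : H ⧸ N₁,
      (R.map (QuotientGroup.mk' N₁)).map (MulAut.conj x).toMonoidHom
        = Q.map (QuotientGroup.mk' N₁))
    (hconj2 : ∃ x : H ⧸ N₂,
      (R.map (QuotientGroup.mk' N₂)).map (MulAut.conj x).toMonoidHom
        = Q.map (QuotientGroup.mk' N₂)) :
    ∃ h ∈ L, R.map (MulAut.conj h).toMonoidHom = Q := by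
  obtain rfl : L = N₁ ⊔ N₂ := SetLike.ext' (by rw [hL, normal_mul])
  obtain ⟨x₁, hx₁⟩ := hconj1
  obtain ⟨x₂, hx₂⟩ := hconj2
  obtain ⟨l₁, hl₁, e₁⟩ := exists_mem_map_mk'_map_conj_eq N₁ hQprod hx₁
  obtain ⟨l₂, hl₂, e₂⟩ := exists_mem_map_mk'_map_conj_eq N₂ hQprod hx₂
  obtain ⟨h, hh, h₁, h₂⟩ := exists_mem_sup_mk_eq_mk hl₁ hl₂
  have hT₁ := (map_mk'_map_conj_congr R h₁).trans e₁
  have hT₂ := (map_mk'_map_conj_congr R h₂).trans e₂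
  have hT : (N₁ ⊔ N₂) ⊓ R.map (MulAut.conj h).toMonoidHom = ⊥ := by
    have hL_conj : (N₁ ⊔ N₂).map (MulAut.conj h).toMonoidHom = N₁ ⊔ N₂ := Normal.map_conj_eq _ h
    rw [← hL_conj, ← map_inf _ _ _ (MulAut.conj h).injective, hRmeet, Subgroup.map_bot]
  exact ⟨h, hh, le_antisymm (le_of_map_mk'_eq hdisj hQmeet hT₁ hT₂)
    (le_of_map_mk'_eq hdisj hT hT₁.symm hT₂.symm)⟩

/-- Let `N₁, N₂ ◁ H` with `N₁ ∩ N₂ = {1}` and let `L` be the subgroup with underlying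
set `N₁N₂`. If `Q, R` are complements to `L` in `H` (i.e. `H = LQ`, `L ∩ Q = {1}`, and
similarly for `R`) whose images in `H/N₁` and in `H/N₂` are conjugate, then `Q = hRh⁻¹`
for some `h ∈ L`. -/
theorem complements_conj_of_conj_in_quotients (H : Type*) [Group H]
    (N₁ N₂ : Subgroup H) [N₁.Normal] [N₂.Normal] (hdisj : N₁ ⊓ N₂ = ⊥)
    (L : Subgroup H) (hL : (L : Set H) = (N₁ : Set H) * (N₂ : Set H))
    (Q R : Subgroup H)
    (hQmeet : L ⊓ Q = ⊥) (hQprod : (L : Set H) * (Q : Set H) = Set.univ)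
    (hRmeet : L ⊓ R = ⊥) (hRprod : (L : Set H) * (R : Set H) = Set.univ)
    (hconj1 : ∃ x : H ⧸ N₁,
      (R.map (QuotientGroup.mk' N₁)).map (MulAut.conj x).toMonoidHom
        = Q.map (QuotientGroup.mk' N₁))
    (hconj2 : ∃ x : H ⧸ N₂,
      (R.map (QuotientGroup.mk' N₂)).map (MulAut.conj x).toMonoidHom
        = Q.map (QuotientGroup.mk' N₂)) :
    ∃ h ∈ L, R.map (MulAut.conj h).toMonoidHom = Q :=
  complements_conj_of_conj_in_quotients_general H N₁ N₂ hdisj L hL Q R hQmeet hQprod hRmeet hconj1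
    hconj2
end

section
/- Let A be a torsion-free group and S a group acting on a finite set Ω. In the permutational wreath product G = A ≀_Ω S = A^Ω ⋊ S, every finite subgroup Q ≤ G is conjugate by an element h of the base group A^Ω into the top group S, i.e. Q ⊆ h S h⁻¹. -/
/-- A monoid is torsion-free if no element other than `1` has finite order
(the definition Mathlib had as `Monoid.IsTorsionFree`; it has since been removed). -/
def Monoid.IsTorsionFree (G : Type*) [Monoid G] : Prop :=
  ∀ g : G, g ≠ 1 → ¬IsOfFinOrder g

/-- The coordinate-permuting automorphism of `Ω → A` induced by `s : S`. -/
def wreathMulAut (A : Type*) [Group A] {S Ω : Type*} [Group S] [MulAction S Ω]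
    (s : S) : MulAut (Ω → A) where
  toFun f := fun x => f (s⁻¹ • x)
  invFun f := fun x => f (s • x)
  left_inv f := by funext x; simp
  right_inv f := by funext x; simp
  map_mul' f g := rfl

/-- The action homomorphism `S →* MulAut (Ω → A)` for the permutational wreath
product. -/
def wreathHom (A : Type*) [Group A] (S : Type*) [Group S] (Ω : Type*)
    [MulAction S Ω] : S →* MulAut (Ω → A) where
  toFun := wreathMulAut A
  map_one' := by
    ext f x
    show f ((1 : S)⁻¹ • x) = f x
    simp
  map_mul' s t := by
    ext f x
    show f ((s * t)⁻¹ • x) = f (t⁻¹ • s⁻¹ • x)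
    rw [mul_inv_rev, mul_smul]

/-- The permutational wreath product `A ≀_Ω S = A^Ω ⋊ S`. -/
abbrev WreathProduct (A : Type*) [Group A] (S : Type*) [Group S] (Ω : Type*)
    [MulAction S Ω] :=
  (Ω → A) ⋊[wreathHom A S Ω] S

/-!
If an element `a` of finite order fixes `y ∈ Ω`, then `(a ^ n).left y = (a.left y) ^ n`, so
`a.left y` is trivial when `A` is torsion-free. Fix a representative `r x` of the `Q`-orbit of each
`x ∈ Ω` and some `u x ∈ Q` carrying `r x` to `x`, and put `g x := (u x).left x`. For `a ∈ Q`
the element `(u x)⁻¹ * a * u (a.right⁻¹ • x)` of `Q` fixes `r x`, and reading off its coordinate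
there gives `a.left x = g x * (g (a.right⁻¹ • x))⁻¹`, i.e. `a = g * a.right * g⁻¹`.
-/

theorem MulAction.exists_orbit_section (G α : Type*) [Group G] [MulAction G α] :
    ∃ rep : α → α, (∀ x, x ∈ orbit G (rep x)) ∧ ∀ (g : G) x, rep (g • x) = rep x := by
  refine ⟨fun x => (Quotient.mk (orbitRel G α) x).out, fun x => ?_, fun g x => ?_⟩
  · exact orbitRel_apply.mp (Quotient.exact (Quotient.out_eq _).symm)
  · exact congrArg Quotient.out (Quotient.sound (mem_orbit x g))

namespace WreathProduct

variable {A : Type*} [Group A] {S : Type*} [Group S] {Ω : Type*} [MulAction S Ω]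

theorem mul_left_apply (a b : WreathProduct A S Ω) (x : Ω) :
    (a * b).left x = a.left x * b.left (a.right⁻¹ • x) :=
  rfl

theorem inv_left_apply (a : WreathProduct A S Ω) (x : Ω) :
    a⁻¹.left x = (a.left (a.right • x))⁻¹ := by
  show (a.left (a.right⁻¹⁻¹ • x))⁻¹ = _
  rw [inv_inv]

theorem pow_left_apply_of_smul_eq {a : WreathProduct A S Ω} {y : Ω} (hy : a.right • y = y)
    (n : ℕ) : (a ^ n).left y = a.left y ^ n := by
  have hy' : a.right⁻¹ • y = y := inv_smul_eq_iff.mpr hy.symm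
  induction n with
  | zero => simp
  | succ n ih => rw [pow_succ', mul_left_apply, hy', ih, pow_succ']

theorem left_apply_eq_one_of_isOfFinOrder (htf : Monoid.IsTorsionFree A)
    {a : WreathProduct A S Ω} (ha : IsOfFinOrder a) {y : Ω} (hy : a.right • y = y) :
    a.left y = 1 := by
  by_contra hne
  refine htf _ hne (isOfFinOrder_iff_pow_eq_one.mpr ?_)
  obtain ⟨n, hn, han⟩ := isOfFinOrder_iff_pow_eq_one.mp ha
  exact ⟨n, hn, by rw [← pow_left_apply_of_smul_eq hy, han]; rfl⟩

theorem eq_inl_mul_inr_mul_inl_inv {a : WreathProduct A S Ω} {g : Ω → A}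
    (h : ∀ x, a.left x = g x * (g (a.right⁻¹ • x))⁻¹) :
    a = SemidirectProduct.inl g * SemidirectProduct.inr a.right
      * (SemidirectProduct.inl g)⁻¹ := by
  refine SemidirectProduct.ext (funext fun x => ?_) (by simp)
  rw [mul_left_apply, mul_left_apply, inv_left_apply, h]
  simp

theorem exists_coboundary_of_left_apply_eq_one (Q : Subgroup (WreathProduct A S Ω))
    (hstab : ∀ a ∈ Q, ∀ y, a.right • y = y → a.left y = 1) :
    ∃ g : Ω → A, ∀ a ∈ Q, ∀ x, a.left x = g x * (g (a.right⁻¹ • x))⁻¹ := by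
  obtain ⟨rep, hrep_orbit, hrep_smul⟩ :=
    MulAction.exists_orbit_section (Q.map SemidirectProduct.rightHom) Ω
  have hrep_eq : ∀ a ∈ Q, ∀ x, rep (a.right⁻¹ • x) = rep x := fun a ha x =>
    hrep_smul ⟨a.right⁻¹, Subgroup.mem_map_of_mem _ (inv_mem ha)⟩ x
  have hu : ∀ x, ∃ u ∈ Q, u.right • rep x = x := fun x => by
    obtain ⟨⟨_, hs⟩, hsx⟩ := hrep_orbit x
    obtain ⟨u, hu, rfl⟩ := Subgroup.mem_map.mp hs
    exact ⟨u, hu, hsx⟩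
  choose u hu_mem hu_smul using hu
  refine ⟨fun x => (u x).left x, fun a ha x => ?_⟩
  set b := u (a.right⁻¹ • x)
  have hb : b.right • rep x = a.right⁻¹ • x := by
    rw [← hrep_eq a ha x]; exact hu_smul _
  have hfix : ((u x)⁻¹ * (a * b)).right • rep x = rep x := by
    simp only [SemidirectProduct.mul_right, SemidirectProduct.inv_right, mul_smul, hb,
      smul_inv_smul, inv_smul_eq_iff, hu_smul]
  have h1 := hstab _ (mul_mem (inv_mem (hu_mem x)) (mul_mem ha (hu_mem _))) _ hfix
  rw [mul_left_apply, inv_left_apply, SemidirectProduct.inv_right, inv_inv, hu_smul,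
    mul_left_apply, inv_mul_eq_one] at h1
  exact eq_mul_inv_of_mul_eq h1.symm

end WreathProduct

theorem finite_subgroup_conj_into_top_general (A : Type*) [Group A]
    (htf : Monoid.IsTorsionFree A)
    (S : Type*) [Group S] (Ω : Type*) [MulAction S Ω]
    (Q : Subgroup (WreathProduct A S Ω)) (hQ : Finite Q) :
    ∃ f : Ω → A, ∀ q ∈ Q, ∃ s : S,
      q = SemidirectProduct.inl f * SemidirectProduct.inr s
            * (SemidirectProduct.inl f)⁻¹ := by
  obtain ⟨f, hf⟩ := WreathProduct.exists_coboundary_of_left_apply_eq_one Q fun q hq _ hy =>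
    WreathProduct.left_apply_eq_one_of_isOfFinOrder htf
      (Q.subtype.isOfFinOrder (isOfFinOrder_of_finite (⟨q, hq⟩ : Q))) hy
  exact ⟨f, fun q hq => ⟨q.right, WreathProduct.eq_inl_mul_inr_mul_inl_inv (hf q hq)⟩⟩

/-- In a permutational wreath product `A ≀_Ω S` with `A` torsion-free and `Ω` finite,
every finite subgroup is conjugate into the top group `S` by an element of the base
group `A^Ω`. -/
theorem finite_subgroup_conj_into_top (A : Type*) [Group A]
    (htf : Monoid.IsTorsionFree A)
    (S : Type*) [Group S] (Ω : Type*) [MulAction S Ω] [Finite Ω]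
    (Q : Subgroup (WreathProduct A S Ω)) (hQ : Finite Q) :
    ∃ f : Ω → A, ∀ q ∈ Q, ∃ s : S,
      q = SemidirectProduct.inl f * SemidirectProduct.inr s
            * (SemidirectProduct.inl f)⁻¹ :=
  finite_subgroup_conj_into_top_general A htf S Ω Q hQ
end

section
/- Let P be a group with a finite-index normal subgroup B isomorphic to ℤ^j (j ≥ 1), and let Q ≤ P be a finite subgroup. Then there exist k ∈ ℕ and an injective homomorphism η : P → ℤ ≀_{Ω_k} S_k (with Ω_k = {1,…,k} and S_k the symmetric group) such that η(B) is contained in the base group ℤ^{Ω_k}, η(Q) is contained in S_k, and η(Q) acts freely on Ω_k. -/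
/-!
Since `B ≅ ℤ^j` is torsion-free, the finite subgroup `Q` meets `B` trivially, so `Q` acts freely
on `P ⧸ B` and we may choose a `Q`-equivariant transversal `σ` of `B`. The Kaloujnine–Krasner
embedding `p ↦ (x ↦ σ(x)⁻¹ p σ(p⁻¹ x), x ↦ p x)` of `P` into `B ≀_{P/B} Sym(P/B)`, followed by
`B ≅ ℤ^j`, gives an embedding into `ℤ ≀ Sym(P/B × Fin j)`. Elements of `B` act trivially on
`P ⧸ B`, so they land in the base group; by equivariance the cocycle of `q ∈ Q` vanishes, so `Q`
lands in the top group, acting on `P/B × Fin j` through its free action on `P ⧸ B`.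
-/

theorem Subgroup.disjoint_of_finite_of_isMulTorsionFree {G : Type*} [Group G] (Q B : Subgroup G)
    [Finite Q] [IsMulTorsionFree B] : Disjoint Q B := by
  rw [Subgroup.disjoint_def]
  intro g hgQ hgB
  have hg : IsOfFinOrder g :=
    Submonoid.isOfFinOrder_coe.mpr (isOfFinOrder_of_finite (⟨g, hgQ⟩ : Q))
  have hgB' : IsOfFinOrder (⟨g, hgB⟩ : B) := Submonoid.isOfFinOrder_coe.mp hg
  simpa using congrArg Subtype.val hgB'.eq_one'

theorem MulAction.exists_section_smul_of_free {G X Y : Type*} [Group G] [MulAction G X]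
    [MulAction G Y] (hfree : ∀ (g : G) (x : X), g • x = x → g = 1) (π : Y → X)
    (hπ : ∀ (g : G) y, π (g • y) = g • π y) (hπ_surj : Function.Surjective π) :
    ∃ s : X → Y, (∀ x, π (s x) = x) ∧ ∀ (g : G) x, s (g • x) = g • s x := by
  let r : X → X := fun x => (Quotient.mk (orbitRel G X) x).out
  have hr_smul (g : G) (x : X) : r (g • x) = r x :=
    congrArg Quotient.out (Quotient.sound (mem_orbit x g))
  have hr_orbit (x : X) : ∃ g : G, g • r x = x :=
    mem_orbit_symm.mp (Quotient.mk_out (s := orbitRel G X) x)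
  choose c hc using hr_orbit
  have hc_smul (g : G) (x : X) : c (g • x) = g * c x := by
    have h : c (g • x) • r x = (g * c x) • r x := by rw [mul_smul, hc, ← hr_smul g x, hc]
    exact (inv_mul_eq_one.mp (hfree _ (r x) (by rw [mul_smul, h, inv_smul_smul]))).symm
  refine ⟨fun x => c x • Function.surjInv hπ_surj (r x), fun x => ?_, fun g x => ?_⟩
  · simp only [hπ, Function.surjInv_eq hπ_surj, hc]
  · simp only [hr_smul, hc_smul, mul_smul]

namespace QuotientGroup

variable {P : Type*} [Group P] {B : Subgroup P} [B.Normal]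

theorem smul_eq_mk_mul (p : P) (x : P ⧸ B) : p • x = (p : P ⧸ B) * x := by
  induction x using QuotientGroup.induction_on
  rfl

theorem smul_eq_self_iff (p : P) (x : P ⧸ B) : p • x = x ↔ p ∈ B := by
  rw [smul_eq_mk_mul, mul_eq_right, eq_one_iff]

theorem exists_section_smul_eq_mul (Q : Subgroup P) (hQB : Disjoint Q B) :
    ∃ σ : P ⧸ B → P, (∀ x, (σ x : P ⧸ B) = x) ∧ ∀ q ∈ Q, ∀ x, σ (q • x) = q * σ x := by
  have hfree (q : Q) (x : P ⧸ B) (hqx : q • x = x) : q = 1 := by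
    change (q : P) • x = x at hqx
    rw [smul_eq_self_iff] at hqx
    simpa using Subgroup.disjoint_def.mp hQB q.2 hqx
  obtain ⟨σ, hσ, hσQ⟩ := MulAction.exists_section_smul_of_free hfree (mk : P → P ⧸ B)
    (fun _ _ => rfl) mk_surjective
  exact ⟨σ, hσ, fun q hq => hσQ ⟨q, hq⟩⟩

end QuotientGroup

theorem wreathHom_apply (A : Type*) [Group A] {S Ω : Type*} [Group S] [MulAction S Ω]
    (s : S) (f : Ω → A) (x : Ω) : wreathHom A S Ω s f x = f (s⁻¹ • x) :=
  rfl

def wreathCongr (A : Type*) [Group A] {X Y : Type*} (e : X ≃ Y) :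
    WreathProduct A (Equiv.Perm X) X ≃* WreathProduct A (Equiv.Perm Y) Y :=
  SemidirectProduct.congr (MulEquiv.arrowCongr e (MulEquiv.refl A)) e.permCongrHom
    (fun τ => by
      ext f y
      simp [wreathHom_apply, Equiv.permCongrHom, Equiv.Perm.inv_def, Equiv.permCongr_def])

theorem wreathCongr_inl (A : Type*) [Group A] {X Y : Type*} (e : X ≃ Y) (f : X → A) :
    wreathCongr A e (SemidirectProduct.inl f) = SemidirectProduct.inl (f ∘ e.symm) := by
  ext1
  · rfl
  · exact map_one e.permCongrHom

theorem wreathCongr_inr (A : Type*) [Group A] {X Y : Type*} (e : X ≃ Y) (τ : Equiv.Perm X) :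
    wreathCongr A e (SemidirectProduct.inr τ) = SemidirectProduct.inr (e.permCongr τ) := by
  ext1 <;> rfl

section InducedWreath

open QuotientGroup

variable {P : Type*} [Group P] {B : Subgroup P} [B.Normal]
  (σ : P ⧸ B → P) (hσ : ∀ x, (σ x : P ⧸ B) = x)

def transversalCocycle (p : P) (x : P ⧸ B) : B :=
  ⟨(σ x)⁻¹ * p * σ (p⁻¹ • x), by
    rw [← eq_one_iff, mk_mul, mk_mul, mk_inv, hσ, hσ, smul_eq_mk_mul, mk_inv]
    group⟩

variable {σ}

theorem transversalCocycle_mul (p p' : P) (x : P ⧸ B) :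
    transversalCocycle σ hσ (p * p') x =
      transversalCocycle σ hσ p x * transversalCocycle σ hσ p' (p⁻¹ • x) := by
  ext
  simp only [transversalCocycle, Subgroup.coe_mul, mul_inv_rev, mul_smul]
  group

theorem transversalCocycle_eq_one {q : P} (hq : ∀ x, σ (q • x) = q * σ x) (x : P ⧸ B) :
    transversalCocycle σ hσ q x = 1 := by
  ext
  simp only [transversalCocycle, Subgroup.coe_one]
  nth_rw 1 [← smul_inv_smul q x, hq]
  group

variable (σ) {A ι : Type*} [Group A]

def inducedWreathHom (φ : B →* (ι → A)) :
    P →* WreathProduct A (Equiv.Perm ((P ⧸ B) × ι)) ((P ⧸ B) × ι) :=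
  MonoidHom.mk'
    (fun p => ⟨fun y => φ (transversalCocycle σ hσ p y.1) y.2,
      (MulAction.toPerm p).prodCongr (Equiv.refl ι)⟩)
    (fun p p' => by
      ext1
      · funext y
        simp [wreathHom_apply, transversalCocycle_mul, Equiv.Perm.inv_def]
      · ext y <;> simp [mul_smul])

variable {σ} {φ : B →* (ι → A)}

theorem inducedWreathHom_left_apply (p : P) (y : (P ⧸ B) × ι) :
    (inducedWreathHom σ hσ φ p).left y = φ (transversalCocycle σ hσ p y.1) y.2 :=
  rfl

theorem inducedWreathHom_right_apply (p : P) (y : (P ⧸ B) × ι) :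
    (inducedWreathHom σ hσ φ p).right y = (p • y.1, y.2) :=
  rfl

theorem inducedWreathHom_right_apply_eq_self_iff (p : P) (y : (P ⧸ B) × ι) :
    (inducedWreathHom σ hσ φ p).right y = y ↔ p ∈ B := by
  rw [inducedWreathHom_right_apply, Prod.ext_iff]
  simp [smul_eq_self_iff]

theorem inducedWreathHom_eq_inl {b : P} (hb : b ∈ B) :
    inducedWreathHom σ hσ φ b = SemidirectProduct.inl (inducedWreathHom σ hσ φ b).left := by
  ext1
  · rfl
  · ext1 y
    simpa using (inducedWreathHom_right_apply_eq_self_iff hσ b y).mpr hb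

theorem inducedWreathHom_eq_inr {q : P} (hq : ∀ x, σ (q • x) = q * σ x) :
    inducedWreathHom σ hσ φ q = SemidirectProduct.inr (inducedWreathHom σ hσ φ q).right := by
  ext1
  · funext y
    simp [inducedWreathHom_left_apply, transversalCocycle_eq_one hσ hq]
  · rfl

theorem inducedWreathHom_injective [Nonempty ι] (hφ : Function.Injective φ) :
    Function.Injective (inducedWreathHom σ hσ φ) := by
  rw [injective_iff_map_eq_one]
  intro p hp
  obtain ⟨i⟩ := ‹Nonempty ι›
  have hpB : p ∈ B := by
    rw [← inducedWreathHom_right_apply_eq_self_iff hσ (φ := φ) p (1, i), hp]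
    rfl
  have hc : transversalCocycle σ hσ p 1 = 1 := by
    refine hφ (funext fun k => ?_)
    have := congrFun (congrArg SemidirectProduct.left hp) (1, k)
    rw [inducedWreathHom_left_apply] at this
    simpa using this
  have h1 : p⁻¹ • (1 : P ⧸ B) = 1 := (smul_eq_self_iff _ _).mpr (B.inv_mem hpB)
  simpa [transversalCocycle, h1, mul_assoc, inv_mul_eq_one] using congrArg Subtype.val hc

end InducedWreath

/-- Embedding a finitely generated virtually-`ℤ^j` group into a complete monomial
group `ℤ ≀_{Ω_k} S_k`, sending `B` into the base, a chosen finite subgroup `Q` into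
`S_k`, and so that the image of `Q` acts freely on `Ω_k`. -/
theorem exists_embedding_into_monomial_group (P : Type*) [Group P]
    (B : Subgroup P) [B.Normal] (hBfi : B.FiniteIndex)
    (j : ℕ) (hj : 1 ≤ j) (e : ↥B ≃* (Fin j → Multiplicative ℤ))
    (Q : Subgroup P) (hQ : Finite Q) :
    ∃ (k : ℕ) (η : P →* WreathProduct (Multiplicative ℤ) (Equiv.Perm (Fin k)) (Fin k)),
      Function.Injective η ∧
      (∀ b ∈ B, ∃ f : Fin k → Multiplicative ℤ, η b = SemidirectProduct.inl f) ∧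
      (∀ q ∈ Q, ∃ σ : Equiv.Perm (Fin k),
        η q = SemidirectProduct.inr σ ∧ (σ ≠ 1 → ∀ x, σ x ≠ x)) := by
  have : IsMulTorsionFree B := e.injective.isMulTorsionFree e.toMonoidHom
  have hQB : Disjoint Q B := Q.disjoint_of_finite_of_isMulTorsionFree B
  obtain ⟨σ, hσ, hσQ⟩ := QuotientGroup.exists_section_smul_eq_mul Q hQB
  have : Fintype (P ⧸ B) := B.fintypeQuotientOfFiniteIndex
  have : Nonempty (Fin j) := ⟨⟨0, hj⟩⟩
  let ε := Fintype.equivFin ((P ⧸ B) × Fin j)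
  let η₀ := inducedWreathHom σ hσ e.toMonoidHom
  refine ⟨_, (wreathCongr _ ε).toMonoidHom.comp η₀, ?_, fun b hb => ⟨(η₀ b).left ∘ ε.symm, ?_⟩,
    fun q hq => ⟨ε.permCongr (η₀ q).right, ?_, fun hne y hy => hne ?_⟩⟩
  · exact (wreathCongr _ ε).injective.comp (inducedWreathHom_injective hσ e.injective)
  · exact (congrArg _ (inducedWreathHom_eq_inl hσ hb)).trans (wreathCongr_inl _ _ _)
  · exact (congrArg _ (inducedWreathHom_eq_inr hσ (hσQ q hq))).trans (wreathCongr_inr _ _ _)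
  · have hqB : q ∈ B :=
      (inducedWreathHom_right_apply_eq_self_iff hσ (φ := e.toMonoidHom) q _).mp
        (ε.symm_apply_eq.mpr hy.symm).symm
    rw [Subgroup.disjoint_def.mp hQB hq hqB, map_one, SemidirectProduct.one_right]
    exact map_one ε.permCongrHom
end

section
/- For natural numbers k, l ≥ 1, set E₁ = ℤ ≀_{Ω_k} S_k and E₂ = ℤ ≀_{Ω_l} S_l, and let c₁ ∈ ℤ^{Ω_k} ⊆ E₁ and c₂ ∈ ℤ^{Ω_l} ⊆ E₂ be nontrivial elements of the base groups. Then with m = kl there exist injective homomorphisms β₁ : E₁ → ℤ ≀_{Ω_m} S_m and β₂ : E₂ → ℤ ≀_{Ω_m} S_m such that: β₁(ℤ^{Ω_k}) and β₂(ℤ^{Ω_l}) lie in the base ℤ^{Ω_m}; βᵢ sends the symmetric group factor into S_m, with permutations acting freely mapped to permutations acting freely; and β₁(c₁) = β₂(c₂). -/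
/-!
Identify `Ω_{kl}` with `Ω_k × Ω_l`. Writing the base groups additively, send `f ∈ ℤ^{Ω_k}` to
the matrix `f ⊗ c₂ = (f i * c₂ j)` and `σ ∈ S_k` to `σ × id`; symmetrically, send `g ∈ ℤ^{Ω_l}`
to `c₁ ⊗ g` and `τ ∈ S_l` to `id × τ`. These maps are compatible with the two actions, so they
assemble into homomorphisms of wreath products, injective because `c₂ ≠ 0`, `c₁ ≠ 0` and `ℤ`
has no zero divisors. Both send the chosen element to `c₁ ⊗ c₂`.
-/

open SemidirectProduct

theorem SemidirectProduct.map_injective {N₁ G₁ N₂ G₂ : Type*} [Group N₁] [Group G₁] [Group N₂]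
    [Group G₂] {φ₁ : G₁ →* MulAut N₁} {φ₂ : G₂ →* MulAut N₂} {fn : N₁ →* N₂} {fg : G₁ →* G₂}
    (h : ∀ g : G₁, fn.comp (φ₁ g).toMonoidHom = (φ₂ (fg g)).toMonoidHom.comp fn)
    (hn : Function.Injective fn) (hg : Function.Injective fg) :
    Function.Injective (map fn fg h) := fun _ _ hxy =>
  SemidirectProduct.ext (hn (congrArg left hxy)) (hg (congrArg right hxy))

namespace Equiv.Perm

variable {α β γ : Type*} (e : α × β ≃ γ)

def prodLeftHom : Perm α →* Perm γ where
  toFun σ := e.permCongr (σ.prodCongr (Equiv.refl β))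
  map_one' := by ext; simp
  map_mul' σ τ := by ext; simp [Prod.map]

theorem prodLeftHom_apply (σ : Perm α) (x : γ) :
    prodLeftHom e σ x = e (σ (e.symm x).1, (e.symm x).2) := rfl

theorem prodLeftHom_injective [Nonempty β] : Function.Injective (prodLeftHom e) := by
  rw [injective_iff_map_eq_one]
  intro σ hσ
  ext a
  obtain ⟨b⟩ := ‹Nonempty β›
  simpa [prodLeftHom_apply] using congrArg (fun τ : Perm γ => (e.symm (τ (e (a, b)))).1) hσ

theorem prodLeftHom_apply_ne {σ : Perm α} (hσ : ∀ a, σ a ≠ a) (x : γ) :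
    prodLeftHom e σ x ≠ x := by
  intro h
  apply hσ (e.symm x).1
  simpa [prodLeftHom_apply] using congrArg (fun y => (e.symm y).1) h

end Equiv.Perm

section Tensor

variable {R α β γ : Type*} [NonUnitalNonAssocRing R] (e : α × β ≃ γ) (c : β → Multiplicative R)

def tensorRightHom : (α → Multiplicative R) →* (γ → Multiplicative R) where
  toFun f x := .ofAdd ((f (e.symm x).1).toAdd * (c (e.symm x).2).toAdd)
  map_one' := by funext; simp
  map_mul' f g := by funext; simp [add_mul]

theorem tensorRightHom_apply (f : α → Multiplicative R) (x : γ) :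
    tensorRightHom e c f x = .ofAdd ((f (e.symm x).1).toAdd * (c (e.symm x).2).toAdd) := rfl

theorem tensorRightHom_injective [NoZeroDivisors R] (hc : c ≠ 1) :
    Function.Injective (tensorRightHom e c) := by
  obtain ⟨b, hb⟩ := Function.ne_iff.mp hc
  rw [injective_iff_map_eq_one]
  intro f hf
  funext a
  have h : (f a).toAdd * (c b).toAdd = 0 := by
    simpa [tensorRightHom_apply] using congrFun hf (e (a, b))
  exact toAdd_eq_zero.mp ((mul_eq_zero.mp h).resolve_right (toAdd_eq_zero.not.mpr hb))

theorem tensorRightHom_comp_wreathHom (σ : Equiv.Perm α) :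
    (tensorRightHom e c).comp (wreathHom (Multiplicative R) (Equiv.Perm α) α σ).toMonoidHom =
      (wreathHom (Multiplicative R) (Equiv.Perm γ) γ (Equiv.Perm.prodLeftHom e σ)).toMonoidHom.comp
        (tensorRightHom e c) := by
  ext f x
  show tensorRightHom e c (fun a => f (σ⁻¹ • a)) x =
    tensorRightHom e c f ((Equiv.Perm.prodLeftHom e σ)⁻¹ • x)
  rw [← map_inv, Equiv.Perm.smul_def, Equiv.Perm.prodLeftHom_apply, tensorRightHom_apply,
    tensorRightHom_apply, Equiv.symm_apply_apply]
  rfl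

def wreathTensorHom :
    WreathProduct (Multiplicative R) (Equiv.Perm α) α →*
      WreathProduct (Multiplicative R) (Equiv.Perm γ) γ :=
  map (tensorRightHom e c) (Equiv.Perm.prodLeftHom e) (tensorRightHom_comp_wreathHom e c)

theorem wreathTensorHom_injective [NoZeroDivisors R] (hc : c ≠ 1) :
    Function.Injective (wreathTensorHom e c) := by
  have : Nonempty β := let ⟨b, _⟩ := Function.ne_iff.mp hc; ⟨b⟩
  exact map_injective _ (tensorRightHom_injective e c hc) (Equiv.Perm.prodLeftHom_injective e)

end Tensor

theorem tensorRightHom_prodComm {R α β γ : Type*} [NonUnitalNonAssocCommRing R] (e : α × β ≃ γ)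
    (f : α → Multiplicative R) (c : β → Multiplicative R) :
    tensorRightHom ((Equiv.prodComm β α).trans e) f c = tensorRightHom e c f := by
  funext x
  exact congrArg Multiplicative.ofAdd (mul_comm _ _)

theorem exists_monomial_amalgamation_general (k l : ℕ)
    (c₁ : Fin k → Multiplicative ℤ) (hc₁ : c₁ ≠ 1)
    (c₂ : Fin l → Multiplicative ℤ) (hc₂ : c₂ ≠ 1) :
    ∃ (β₁ : WreathProduct (Multiplicative ℤ) (Equiv.Perm (Fin k)) (Fin k) →*
            WreathProduct (Multiplicative ℤ) (Equiv.Perm (Fin (k * l))) (Fin (k * l)))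
      (β₂ : WreathProduct (Multiplicative ℤ) (Equiv.Perm (Fin l)) (Fin l) →*
            WreathProduct (Multiplicative ℤ) (Equiv.Perm (Fin (k * l))) (Fin (k * l))),
      Function.Injective β₁ ∧ Function.Injective β₂ ∧
      (∀ f : Fin k → Multiplicative ℤ, ∃ g : Fin (k * l) → Multiplicative ℤ,
        β₁ (SemidirectProduct.inl f) = SemidirectProduct.inl g) ∧
      (∀ f : Fin l → Multiplicative ℤ, ∃ g : Fin (k * l) → Multiplicative ℤ,
        β₂ (SemidirectProduct.inl f) = SemidirectProduct.inl g) ∧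
      (∀ σ : Equiv.Perm (Fin k), ∃ τ : Equiv.Perm (Fin (k * l)),
        β₁ (SemidirectProduct.inr σ) = SemidirectProduct.inr τ ∧
          ((∀ x, σ x ≠ x) → ∀ y, τ y ≠ y)) ∧
      (∀ σ : Equiv.Perm (Fin l), ∃ τ : Equiv.Perm (Fin (k * l)),
        β₂ (SemidirectProduct.inr σ) = SemidirectProduct.inr τ ∧
          ((∀ x, σ x ≠ x) → ∀ y, τ y ≠ y)) ∧
      β₁ (SemidirectProduct.inl c₁) = β₂ (SemidirectProduct.inl c₂) := by
  let e : Fin k × Fin l ≃ Fin (k * l) := finProdFinEquiv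
  let e' : Fin l × Fin k ≃ Fin (k * l) := (Equiv.prodComm _ _).trans e
  refine ⟨wreathTensorHom e c₂, wreathTensorHom e' c₁, wreathTensorHom_injective e c₂ hc₂,
    wreathTensorHom_injective e' c₁ hc₁, fun f => ⟨_, map_inl ..⟩, fun f => ⟨_, map_inl ..⟩,
    fun σ => ⟨_, map_inr .., Equiv.Perm.prodLeftHom_apply_ne e⟩,
    fun σ => ⟨_, map_inr .., Equiv.Perm.prodLeftHom_apply_ne e'⟩, ?_⟩
  simp only [wreathTensorHom, map_inl]
  exact congrArg inl (tensorRightHom_prodComm e c₁ c₂).symm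

/-- Amalgamating two complete monomial groups `ℤ ≀_{Ω_k} S_k` and `ℤ ≀_{Ω_l} S_l`
inside `ℤ ≀_{Ω_{kl}} S_{kl}`: there are injective homomorphisms sending bases into the
base and symmetric groups into the symmetric group (freely acting permutations going to
freely acting permutations), matching the two chosen nontrivial base elements. -/
theorem exists_monomial_amalgamation (k l : ℕ) (hk : 1 ≤ k) (hl : 1 ≤ l)
    (c₁ : Fin k → Multiplicative ℤ) (hc₁ : c₁ ≠ 1)
    (c₂ : Fin l → Multiplicative ℤ) (hc₂ : c₂ ≠ 1) :
    ∃ (β₁ : WreathProduct (Multiplicative ℤ) (Equiv.Perm (Fin k)) (Fin k) →*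
            WreathProduct (Multiplicative ℤ) (Equiv.Perm (Fin (k * l))) (Fin (k * l)))
      (β₂ : WreathProduct (Multiplicative ℤ) (Equiv.Perm (Fin l)) (Fin l) →*
            WreathProduct (Multiplicative ℤ) (Equiv.Perm (Fin (k * l))) (Fin (k * l))),
      Function.Injective β₁ ∧ Function.Injective β₂ ∧
      (∀ f : Fin k → Multiplicative ℤ, ∃ g : Fin (k * l) → Multiplicative ℤ,
        β₁ (SemidirectProduct.inl f) = SemidirectProduct.inl g) ∧
      (∀ f : Fin l → Multiplicative ℤ, ∃ g : Fin (k * l) → Multiplicative ℤ,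
        β₂ (SemidirectProduct.inl f) = SemidirectProduct.inl g) ∧
      (∀ σ : Equiv.Perm (Fin k), ∃ τ : Equiv.Perm (Fin (k * l)),
        β₁ (SemidirectProduct.inr σ) = SemidirectProduct.inr τ ∧
          ((∀ x, σ x ≠ x) → ∀ y, τ y ≠ y)) ∧
      (∀ σ : Equiv.Perm (Fin l), ∃ τ : Equiv.Perm (Fin (k * l)),
        β₂ (SemidirectProduct.inr σ) = SemidirectProduct.inr τ ∧
          ((∀ x, σ x ≠ x) → ∀ y, τ y ≠ y)) ∧
      β₁ (SemidirectProduct.inl c₁) = β₂ (SemidirectProduct.inl c₂) :=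
  exists_monomial_amalgamation_general k l c₁ hc₁ c₂ hc₂
end

section
/- Let A ◁ G be a torsion-free abelian normal subgroup of a group G, and for n ≥ 1 let P_n be the quotient of the semidirect product A ⋊ G (G acting on A by conjugation) by the normal subgroup N_n = {(aⁿ, a⁻¹) : a ∈ A}. Then: (1) N_n is indeed normal in A ⋊ G; (2) the map ξ_n : G → P_n, g ↦ [(1,g)], is an injective homomorphism; (3) B_n := image of A×{1} in P_n is isomorphic to A; and (4) P_n / B_n is isomorphic to G/A. -/
/-!
Since `A` is abelian, `a ↦ (aⁿ, a⁻¹)` is a homomorphism `A →* A ⋊ G` with range `N_n`.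
Conjugation by `(b, 1)` fixes each `(aⁿ, a⁻¹)`, and conjugation by `(1, g)` sends it to the
element attached to `g a g⁻¹`, so `N_n` is normal. If `(1, g) ∈ N_n` then `g = a⁻¹` with
`aⁿ = 1`, so `g = 1` by torsion-freeness; if `(b, 1) ∈ N_n` then `a = 1` and `b = 1`.
Finally `(b, g) ↦ gA` kills `N_n`, and its kernel on `P_n` is `B_n`, because for `g ∈ A`
we have `(b, g) = (b gⁿ, 1) · (g⁻ⁿ, g)` with the second factor in `N_n`.
-/

namespace RootConstruction

open SemidirectProduct
open scoped IsMulCommutative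

variable {G : Type*} [Group G] (A : Subgroup G) [A.Normal] [IsMulCommutative A] (n : ℕ)

lemma conjNormal_coe_apply (a x : A) : MulAut.conjNormal (a : G) x = x := by
  ext
  rw [MulAut.conjNormal_apply, setLike_mul_comm a.2 x.2, mul_inv_cancel_right]

def powInvHom : A →* A ⋊[MulAut.conjNormal] G where
  toFun a := ⟨a ^ n, (a : G)⁻¹⟩
  map_one' := by ext <;> simp
  map_mul' a b := by
    ext
    · simp only [mul_left, ← InvMemClass.coe_inv, conjNormal_coe_apply, mul_pow]
    · simp only [mul_right, Subgroup.coe_mul, mul_inv_rev, setLike_mul_comm a.2 b.2]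

@[simp]
lemma left_powInvHom (a : A) : (powInvHom A n a).left = a ^ n := rfl

@[simp]
lemma right_powInvHom (a : A) : (powInvHom A n a).right = (a : G)⁻¹ := rfl

lemma inl_mul_powInvHom_mul_inl_inv (b a : A) :
    inl b * powInvHom A n a * inl b⁻¹ = powInvHom A n a := by
  refine SemidirectProduct.ext ?_ (by simp)
  simp only [mul_left, mul_right, left_inl, right_inl, left_powInvHom, right_powInvHom, map_one,
    MulAut.one_apply, one_mul, ← InvMemClass.coe_inv, conjNormal_coe_apply]
  rw [mul_comm b, mul_inv_cancel_right]

lemma inr_mul_powInvHom_mul_inr_inv (g : G) (a : A) :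
    inr g * powInvHom A n a * inr g⁻¹ = powInvHom A n (MulAut.conjNormal g a) := by
  ext
  · simp [conj_pow]
  · simp [mul_assoc]

instance normal_range_powInvHom : (powInvHom A n).range.Normal where
  conj_mem := by
    rintro _ ⟨a, rfl⟩ p
    obtain ⟨b, g⟩ := p
    have hconj : inl b * inr g * powInvHom A n a * (inl b * inr g)⁻¹
        = powInvHom A n (MulAut.conjNormal g a) :=
      calc inl b * inr g * powInvHom A n a * (inl b * inr g)⁻¹
          = inl b * (inr g * powInvHom A n a * inr g⁻¹) * inl b⁻¹ := by
            simp only [mul_inv_rev, map_inv, mul_assoc]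
        _ = powInvHom A n (MulAut.conjNormal g a) := by
            rw [inr_mul_powInvHom_mul_inr_inv, inl_mul_powInvHom_mul_inl_inv]
    rw [mk_eq_inl_mul_inr, hconj]
    exact ⟨_, rfl⟩

lemma injective_mk'_comp_inl :
    Function.Injective ((QuotientGroup.mk' (powInvHom A n).range).comp
      (inl : A →* A ⋊[MulAut.conjNormal] G)) := by
  refine (injective_iff_map_eq_one _).2 fun x hx => ?_
  obtain ⟨a, ha⟩ := (QuotientGroup.eq_one_iff _).1 hx
  have ha_one : a = 1 := by simpa using congrArg right ha
  simpa [ha_one] using (congrArg left ha).symm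

lemma injective_mk'_comp_inr [IsMulTorsionFree A] (hn : n ≠ 0) :
    Function.Injective ((QuotientGroup.mk' (powInvHom A n).range).comp
      (inr : G →* A ⋊[MulAut.conjNormal] G)) := by
  refine (injective_iff_map_eq_one _).2 fun g hg => ?_
  obtain ⟨a, ha⟩ := (QuotientGroup.eq_one_iff _).1 hg
  have ha_one : a = 1 := (pow_eq_one_iff_left hn).1 (congrArg left ha)
  simpa [ha_one] using (congrArg right ha).symm

def liftRight : (A ⋊[MulAut.conjNormal] G) ⧸ (powInvHom A n).range →* G ⧸ A :=
  QuotientGroup.lift _ ((QuotientGroup.mk' A).comp rightHom) <| by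
    rintro _ ⟨a, rfl⟩
    simp

lemma liftRight_surjective : Function.Surjective (liftRight A n) :=
  QuotientGroup.lift_surjective_of_surjective _ _
    (by
      rw [MonoidHom.coe_comp]
      exact (QuotientGroup.mk'_surjective A).comp rightHom_surjective) _

lemma ker_liftRight :
    (liftRight A n).ker
      = ((QuotientGroup.mk' (powInvHom A n).range).comp
          (inl : A →* A ⋊[MulAut.conjNormal] G)).range := by
  rw [liftRight, QuotientGroup.ker_lift, MonoidHom.range_comp, ← MonoidHom.comap_ker,
    QuotientGroup.ker_mk']
  refine le_antisymm ?_ (Subgroup.map_mono ?_)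
  · rintro _ ⟨p, hp, rfl⟩
    set g : A := ⟨p.right, hp⟩
    refine ⟨inl (p.left * g ^ n), ⟨_, rfl⟩, (QuotientGroup.eq).2 ⟨g⁻¹, ?_⟩⟩
    ext
    · simp [-map_pow, g]
      group
    · simp [-map_pow, g]
  · rintro _ ⟨x, rfl⟩
    simp [one_mem]

instance normal_range_mk'_comp_inl :
    ((QuotientGroup.mk' (powInvHom A n).range).comp
      (inl : A →* A ⋊[MulAut.conjNormal] G)).range.Normal := by
  rw [← ker_liftRight]
  infer_instance

noncomputable def quotientRangeInlEquiv :
    ((A ⋊[MulAut.conjNormal] G) ⧸ (powInvHom A n).range) ⧸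
        ((QuotientGroup.mk' (powInvHom A n).range).comp
          (inl : A →* A ⋊[MulAut.conjNormal] G)).range ≃* G ⧸ A :=
  (QuotientGroup.quotientMulEquivOfEq (ker_liftRight A n).symm).trans
    (QuotientGroup.quotientKerEquivOfSurjective _ (liftRight_surjective A n))

end RootConstruction

/-- Let `A ◁ G` be a torsion-free abelian normal subgroup and `n ≥ 1`. In the
semidirect product `A ⋊ G` (with `G` acting by conjugation), the set
`N_n = {(aⁿ, a⁻¹) : a ∈ A}` is a normal subgroup; the map `ξ_n : g ↦ [(1, g)]` into
`P_n = (A ⋊ G)/N_n` is an injective homomorphism; `B_n`, the image of `A × {1}` in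
`P_n`, is isomorphic to `A`; and `P_n / B_n` is isomorphic to `G/A`. -/
theorem semidirect_quotient_root_construction (G : Type*) [Group G]
    (A : Subgroup G) [A.Normal]
    (habel : ∀ x y : ↥A, x * y = y * x) (htf : ∀ g : ↥A, g ≠ 1 → ¬IsOfFinOrder g)
    (n : ℕ) (hn : 1 ≤ n) :
    ∃ N : Subgroup (↥A ⋊[MulAut.conjNormal] G),
      (N : Set (↥A ⋊[MulAut.conjNormal] G))
          = {p | ∃ a : ↥A, p = ⟨a ^ n, (a : G)⁻¹⟩} ∧
      ∃ _hN : N.Normal,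
        Function.Injective ((QuotientGroup.mk' N).comp SemidirectProduct.inr) ∧
        Nonempty
          (↥(((QuotientGroup.mk' N).comp SemidirectProduct.inl).range) ≃* ↥A) ∧
        ∃ _hB : (((QuotientGroup.mk' N).comp SemidirectProduct.inl).range).Normal,
          Nonempty
            ((((↥A ⋊[MulAut.conjNormal] G) ⧸ N) ⧸
                ((QuotientGroup.mk' N).comp SemidirectProduct.inl).range)
              ≃* (G ⧸ A)) := by
  have : IsMulCommutative A := isMulCommutative_iff.2 habel
  have : IsMulTorsionFree A := by
    open scoped IsMulCommutative in exact IsMulTorsionFree.of_not_isOfFinOrder htf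
  refine ⟨(RootConstruction.powInvHom A n).range, ?_, inferInstance,
    RootConstruction.injective_mk'_comp_inr A n (Nat.one_le_iff_ne_zero.1 hn),
    ⟨(MonoidHom.ofInjective (RootConstruction.injective_mk'_comp_inl A n)).symm⟩,
    inferInstance, ⟨RootConstruction.quotientRangeInlEquiv A n⟩⟩
  rw [MonoidHom.coe_range]
  exact Set.ext fun p => exists_congr fun a => eq_comm
end

section
/- Let A ◁ G be a torsion-free abelian normal subgroup with Q := G/A finite, and let n be a positive integer divisible by |Q|. Let P_n = (A ⋊ G)/N_n with N_n = {(aⁿ, a⁻¹) : a ∈ A} and B_n the image of A × {1}. Then the extension B_n → P_n → Q splits, i.e. P_n is isomorphic to a semidirect product B_n ⋊ Q. -/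
/-! Since `A` is abelian, conjugation makes it a `Q`-module, `Q = G ⧸ A`, and the factor set `f`
of the set-theoretic section `q ↦ q.out` of `G → Q` is a 2-cocycle. The subgroup `N_n` is the range
of the homomorphism `a ↦ (aⁿ, a⁻¹)`, so in `P_n` the element `inr a` equals `inl (aⁿ)`; hence the
section `q ↦ inr q.out` of `P_n → Q` has factor set `fⁿ`. Multiplying the cocycle identity over its
last variable shows that `f ^ |Q|` is the coboundary of `g ↦ ∏ₕ f (g, h)`, so `fⁿ` is a coboundary
when `|Q| ∣ n`, and correcting the section by it yields a homomorphic section `σ`. Its range is a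
complement of `B_n`, the kernel of `P_n → Q`. -/

open Finset SemidirectProduct

theorem Subgroup.isComplement'_ker_range_of_rightInverse {P Q : Type*} [Group P] [Group Q]
    {π : P →* Q} {σ : Q →* P} (h : Function.RightInverse σ π) :
    Subgroup.IsComplement' π.ker σ.range := by
  refine Subgroup.isComplement'_of_disjoint_and_mul_eq_univ ?_ ?_
  · rw [Subgroup.disjoint_def]
    rintro _ hx ⟨q, rfl⟩
    rw [MonoidHom.mem_ker, h q] at hx
    rw [hx, map_one]
  · refine Set.eq_univ_of_forall fun p => ⟨p * (σ (π p))⁻¹, ?_, σ (π p), ⟨π p, rfl⟩, by group⟩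
    simp [h (π p)]

namespace groupCohomology

variable {Q M : Type*} [CommGroup M]

theorem IsMulCoboundary₂.pow [Monoid Q] [MulDistribMulAction Q M] {f : Q × Q → M}
    (hf : IsMulCoboundary₂ f) (k : ℕ) : IsMulCoboundary₂ (f ^ k) := by
  obtain ⟨x, hx⟩ := hf
  exact ⟨x ^ k, fun g h => by simp only [Pi.pow_apply, smul_pow', ← hx g h, div_pow, mul_pow]⟩

variable [Group Q] [MulDistribMulAction Q M]

theorem IsMulCocycle₂.isMulCoboundary₂_pow_card [Fintype Q] {f : Q × Q → M}
    (hf : IsMulCocycle₂ f) : IsMulCoboundary₂ (f ^ Fintype.card Q) := by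
  refine ⟨fun g => ∏ h, f (g, h), fun g h => ?_⟩
  have key : (∏ j, f (g * h, j)) * f (g, h) ^ Fintype.card Q
      = g • (∏ j, f (h, j)) * ∏ j, f (g, j) :=
    calc (∏ j, f (g * h, j)) * f (g, h) ^ Fintype.card Q
        = ∏ j, (f (g * h, j) * f (g, h)) := by rw [prod_mul_distrib, prod_const, card_univ]
      _ = ∏ j, (g • f (h, j) * f (g, h * j)) := prod_congr rfl fun j _ => hf g h j
      _ = g • (∏ j, f (h, j)) * ∏ j, f (g, j) := by
        rw [prod_mul_distrib, ← Finset.smul_prod',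
          Fintype.prod_equiv (Equiv.mulLeft h) (fun j => f (g, h * j)) (fun j => f (g, j))
            fun _ => rfl]
  rw [Pi.pow_apply, div_mul_eq_mul_div, div_eq_iff_eq_mul, ← key, mul_comm]

theorem IsMulCocycle₂.isMulCoboundary₂_pow [Finite Q] {f : Q × Q → M}
    (hf : IsMulCocycle₂ f) {n : ℕ} (hn : Nat.card Q ∣ n) : IsMulCoboundary₂ (f ^ n) := by
  have := Fintype.ofFinite Q
  obtain ⟨k, rfl⟩ := hn
  rw [Nat.card_eq_fintype_card, pow_mul]
  exact hf.isMulCoboundary₂_pow_card.pow k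

theorem exists_rightInverse_of_isMulCoboundary₂ {P : Type*} [Group P] (ι : M →* P) (π : P →* Q)
    (t : Q → P) (f : Q × Q → M) (hπι : ∀ m, π (ι m) = 1) (hπt : ∀ q, π (t q) = q)
    (ht_conj : ∀ q m, t q * ι m = ι (q • m) * t q)
    (ht_mul : ∀ q r, t q * t r = ι (f (q, r)) * t (q * r))
    (hf : IsMulCoboundary₂ f) : ∃ σ : Q →* P, Function.RightInverse σ π := by
  obtain ⟨x, hx⟩ := hf
  refine ⟨MonoidHom.mk' (fun q => ι (x q)⁻¹ * t q) fun q r => ?_, fun q => ?_⟩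
  · symm
    calc ι (x q)⁻¹ * t q * (ι (x r)⁻¹ * t r)
        = ι (x q)⁻¹ * (t q * ι (x r)⁻¹) * t r := by simp only [mul_assoc]
      _ = ι ((x q)⁻¹ * q • (x r)⁻¹ * f (q, r)) * t (q * r) := by
        simp only [ht_conj, map_mul, mul_assoc, ht_mul]
      _ = ι (x (q * r))⁻¹ * t (q * r) := by
        rw [← hx, smul_inv', ← mul_inv, div_mul_eq_mul_div, mul_comm (x q), div_eq_mul_inv,
          inv_mul_cancel_left]
  · simp [hπι, hπt]

end groupCohomology

open groupCohomology

open scoped IsMulCommutative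

namespace Subgroup

variable {G : Type*} [Group G] (A : Subgroup G) [A.Normal] [IsMulCommutative A]

theorem conjNormal_coe_eq_one (a : A) : MulAut.conjNormal (H := A) a = 1 := by
  ext x
  rw [MulAut.conjNormal_apply, ← coe_mul, mul_comm a x, coe_mul, mul_inv_cancel_right]
  rfl

noncomputable def quotientConjAct : G ⧸ A →* MulAut A :=
  QuotientGroup.lift A MulAut.conjNormal fun a ha => conjNormal_coe_eq_one A ⟨a, ha⟩

noncomputable instance : MulDistribMulAction (G ⧸ A) A :=
  MulDistribMulAction.compHom A (quotientConjAct A)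

theorem quotient_smul_eq_conjNormal_out (q : G ⧸ A) (a : A) :
    q • a = MulAut.conjNormal q.out a := by
  conv_lhs => rw [← QuotientGroup.out_eq' q]
  rfl

noncomputable def factorSet (p : (G ⧸ A) × (G ⧸ A)) : A :=
  ⟨p.1.out * p.2.out * (p.1 * p.2).out⁻¹, by
    rw [← QuotientGroup.eq_one_iff]
    simp⟩

theorem isMulCocycle₂_factorSet : IsMulCocycle₂ (factorSet A) := by
  intro q r t
  rw [mul_comm]
  ext
  simp [factorSet, quotient_smul_eq_conjNormal_out, mul_assoc]

variable (n : ℕ)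

def powInvHom : A →* A ⋊[MulAut.conjNormal] G :=
  MonoidHom.mk' (fun a => ⟨a ^ n, (a : G)⁻¹⟩) fun a b => by
    refine SemidirectProduct.ext ?_ ?_
    · change (a * b) ^ n = a ^ n * MulAut.conjNormal ((a⁻¹ : A) : G) (b ^ n)
      rw [conjNormal_coe_eq_one, mul_pow, MulAut.one_apply]
    · change ((a * b : A) : G)⁻¹ = (a : G)⁻¹ * (b : G)⁻¹
      rw [mul_comm a b, coe_mul, mul_inv_rev]

@[simp] theorem powInvHom_left (a : A) : (powInvHom A n a).left = a ^ n := rfl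

@[simp] theorem powInvHom_right (a : A) : (powInvHom A n a).right = (a : G)⁻¹ := rfl

theorem commute_inl_powInvHom (b a : A) : Commute (inl b) (powInvHom A n a) := by
  refine SemidirectProduct.ext ?_ ?_
  · simp only [mul_left, left_inl, right_inl, powInvHom_left, powInvHom_right, map_one,
      MulAut.one_apply, ← coe_inv, conjNormal_coe_eq_one]
    exact mul_comm _ _
  · simp

theorem inr_conj_powInvHom (g : G) (a : A) :
    inr g * powInvHom A n a * (inr g)⁻¹ = powInvHom A n (MulAut.conjNormal g a) := by
  ext
  · simp
  · simp [mul_assoc]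

instance : (powInvHom A n).range.Normal where
  conj_mem := by
    rintro _ ⟨a, rfl⟩ x
    refine ⟨MulAut.conjNormal x.right a, ?_⟩
    conv_rhs => rw [← inl_left_mul_inr_right x]
    calc powInvHom A n (MulAut.conjNormal x.right a)
        = inl x.left * (inr x.right * powInvHom A n a * (inr x.right)⁻¹) * (inl x.left)⁻¹ := by
          rw [inr_conj_powInvHom, (commute_inl_powInvHom A n _ _).eq, mul_inv_cancel_right]
      _ = inl x.left * inr x.right * powInvHom A n a * (inl x.left * inr x.right)⁻¹ := by group

theorem mk_inr_coe_eq_mk_inl_pow (a : A) :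
    QuotientGroup.mk' (powInvHom A n).range (inr (a : G)) =
      QuotientGroup.mk' (powInvHom A n).range (inl (a ^ n)) := by
  refine (QuotientGroup.eq_iff_div_mem.mpr (MonoidHom.mem_range.mpr ⟨a, ?_⟩)).symm
  rw [div_eq_mul_inv, ← map_inv, ← mk_eq_inl_mul_inr]
  rfl

noncomputable def quotientRightHom :
    (A ⋊[MulAut.conjNormal] G) ⧸ (powInvHom A n).range →* G ⧸ A :=
  QuotientGroup.lift _ ((QuotientGroup.mk' A).comp rightHom) <| by
    rintro _ ⟨a, rfl⟩
    simp

theorem range_inl_eq_ker_quotientRightHom :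
    ((QuotientGroup.mk' (powInvHom A n).range).comp inl).range = (quotientRightHom A n).ker := by
  refine le_antisymm ?_ fun p hp => ?_
  · rintro _ ⟨a, rfl⟩
    simp [quotientRightHom]
  obtain ⟨x, rfl⟩ := QuotientGroup.mk'_surjective _ p
  have hx : x.right ∈ A := by simpa [quotientRightHom] using hp
  refine ⟨x.left * ⟨x.right, hx⟩ ^ n, ?_⟩
  rw [MonoidHom.comp_apply, map_mul, map_mul, ← mk_inr_coe_eq_mk_inl_pow, ← map_mul,
    inl_left_mul_inr_right]

theorem mk_inr_out_mul_mk_inl (q : G ⧸ A) (a : A) :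
    QuotientGroup.mk' (powInvHom A n).range (inr q.out) * QuotientGroup.mk' _ (inl a) =
      QuotientGroup.mk' _ (inl (q • a)) * QuotientGroup.mk' _ (inr q.out) := by
  rw [quotient_smul_eq_conjNormal_out, inl_aut, ← map_mul, ← map_mul, map_inv,
    inv_mul_cancel_right]

theorem mk_inr_out_mul_mk_inr_out (q r : G ⧸ A) :
    QuotientGroup.mk' (powInvHom A n).range (inr q.out) * QuotientGroup.mk' _ (inr r.out) =
      QuotientGroup.mk' _ (inl ((factorSet A ^ n) (q, r))) *
        QuotientGroup.mk' _ (inr (q * r).out) := by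
  have : q.out * r.out = factorSet A (q, r) * (q * r).out := (inv_mul_cancel_right _ _).symm
  rw [Pi.pow_apply, ← mk_inr_coe_eq_mk_inl_pow]
  simp only [← map_mul, this]

theorem exists_rightInverse_quotientRightHom [Finite (G ⧸ A)] (hn : Nat.card (G ⧸ A) ∣ n) :
    ∃ σ : G ⧸ A →* (A ⋊[MulAut.conjNormal] G) ⧸ (powInvHom A n).range,
      Function.RightInverse σ (quotientRightHom A n) :=
  exists_rightInverse_of_isMulCoboundary₂ ((QuotientGroup.mk' _).comp inl) (quotientRightHom A n)
    (fun q => QuotientGroup.mk' _ (inr q.out)) (factorSet A ^ n)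
    (fun _ => by simp [quotientRightHom]) (fun _ => by simp [quotientRightHom])
    (mk_inr_out_mul_mk_inl A n) (mk_inr_out_mul_mk_inr_out A n)
    ((isMulCocycle₂_factorSet A).isMulCoboundary₂_pow hn)

end Subgroup

theorem semidirect_quotient_root_splits_general (G : Type*) [Group G]
    (A : Subgroup G) [A.Normal]
    (habel : ∀ x y : ↥A, x * y = y * x)
    [Finite (G ⧸ A)]
    (n : ℕ) (hdvd : Nat.card (G ⧸ A) ∣ n) :
    ∃ N : Subgroup (↥A ⋊[MulAut.conjNormal] G),
      (N : Set (↥A ⋊[MulAut.conjNormal] G))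
          = {p | ∃ a : ↥A, p = ⟨a ^ n, (a : G)⁻¹⟩} ∧
      ∃ _hN : N.Normal,
        ∃ C : Subgroup ((↥A ⋊[MulAut.conjNormal] G) ⧸ N),
          Subgroup.IsComplement'
            (((QuotientGroup.mk' N).comp SemidirectProduct.inl).range) C ∧
          Nonempty (↥C ≃* (G ⧸ A)) := by
  have : IsMulCommutative A := isMulCommutative_iff.mpr habel
  obtain ⟨σ, hσ⟩ := A.exists_rightInverse_quotientRightHom n hdvd
  refine ⟨(A.powInvHom n).range, Set.ext fun p => exists_congr fun a => eq_comm, inferInstance,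
    σ.range, ?_, ⟨(MonoidHom.ofInjective hσ.injective).symm⟩⟩
  rw [A.range_inl_eq_ker_quotientRightHom n]
  exact Subgroup.isComplement'_ker_range_of_rightInverse hσ

/-- Let `A ◁ G` be a torsion-free abelian normal subgroup with `Q = G/A` finite, and
let `n` be a positive integer divisible by `|Q|`. Form `P_n = (A ⋊ G)/N_n` where
`N_n = {(aⁿ, a⁻¹) : a ∈ A}`, and let `B_n` be the image of `A × {1}` in `P_n`. Then the
extension `B_n → P_n → Q` splits: `B_n` has a complement in `P_n`, and this complement
is isomorphic to `Q = G/A` (so `P_n ≅ B_n ⋊ Q`). -/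
theorem semidirect_quotient_root_splits (G : Type*) [Group G]
    (A : Subgroup G) [A.Normal]
    (habel : ∀ x y : ↥A, x * y = y * x) (htf : ∀ g : ↥A, g ≠ 1 → ¬IsOfFinOrder g)
    [Finite (G ⧸ A)]
    (n : ℕ) (hn : 0 < n) (hdvd : Nat.card (G ⧸ A) ∣ n) :
    ∃ N : Subgroup (↥A ⋊[MulAut.conjNormal] G),
      (N : Set (↥A ⋊[MulAut.conjNormal] G))
          = {p | ∃ a : ↥A, p = ⟨a ^ n, (a : G)⁻¹⟩} ∧
      ∃ _hN : N.Normal,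
        ∃ C : Subgroup ((↥A ⋊[MulAut.conjNormal] G) ⧸ N),
          Subgroup.IsComplement'
            (((QuotientGroup.mk' N).comp SemidirectProduct.inl).range) C ∧
          Nonempty (↥C ≃* (G ⧸ A)) :=
  semidirect_quotient_root_splits_general G A habel n hdvd
end

section
/- Let G be a finitely generated group and A an infinite virtually cyclic subgroup of G. Suppose there exists a homomorphism φ : G → P with P finitely generated virtually abelian such that φ(A) is infinite. Then there exist a finite-index subgroup K ≤ G and a homomorphism ψ : K → ℝ with ψ(K ∩ A) ≠ {0}. -/
/-!
If `g` generates a finite-index cyclic subgroup of `A`, then `φ g` has infinite order: otherwise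
`φ(A)` would be covered by finitely many cosets of the finite group `⟨φ g⟩`. Some power `(φ g)ⁿ`
lies in a finite-index abelian subgroup `H` of `P`. Being finitely generated, `H` is free abelian
modulo its torsion, so a coordinate of that free quotient is a character `H → ℝ` that is nonzero
on `(φ g)ⁿ`. Its pullback to `K = φ⁻¹(H)` is nonzero on `gⁿ ∈ K ∩ A`.
-/

/-- A group is virtually cyclic if it has a cyclic subgroup of finite index. -/
def IsVirtuallyCyclic (G : Type*) [Group G] : Prop :=
  ∃ H : Subgroup G, H.FiniteIndex ∧ ∃ g : G, H = Subgroup.zpowers g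

/-- A group is virtually abelian if it has an abelian subgroup of finite index. -/
def VirtuallyAbelian (G : Type*) [Group G] : Prop :=
  ∃ H : Subgroup G, H.FiniteIndex ∧ ∀ x ∈ H, ∀ y ∈ H, x * y = y * x

open Subgroup

instance Subgroup.finiteIndex_comap {G P : Type*} [Group G] [Group P] (φ : G →* P)
    (H : Subgroup P) [H.FiniteIndex] : (H.comap φ).FiniteIndex := by
  have : H.IsFiniteRelIndex φ.range := isFiniteRelIndex_of_finiteIndex
  exact ⟨by rw [index_comap]; exact relIndex_ne_zero⟩

theorem MonoidHom.finite_range_of_finite_map {G G' : Type*} [Group G] [Group G'] (f : G →* G')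
    (H : Subgroup G) [H.FiniteIndex] [Finite (H.map f)] : Finite f.range := by
  let H' := H.map f.rangeRestrict
  have : H'.FiniteIndex :=
    ⟨ne_zero_of_dvd_ne_zero FiniteIndex.index_ne_zero (H.index_map_dvd f.rangeRestrict_surjective)⟩
  have : Finite H' := by
    have hH' : H'.map f.range.subtype = H.map f := by
      rw [map_map, f.subtype_comp_rangeRestrict]
    rwa [(H'.equivMapOfInjective _ f.range.subtype_injective).finite_iff, hH']
  exact (finite_iff_finite_and_finiteIndex H').mpr ⟨‹_›, ‹_›⟩

theorem MonoidHom.not_isOfFinOrder_of_infinite_range {G G' : Type*} [Group G] [Group G']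
    (f : G →* G') {g : G} [(zpowers g).FiniteIndex] (hf : Infinite f.range) :
    ¬IsOfFinOrder (f g) := by
  intro hfg
  have : Finite ((zpowers g).map f) := by
    rw [MonoidHom.map_zpowers]
    exact hfg.finite_zpowers.to_subtype
  exact not_finite_iff_infinite.mpr hf (f.finite_range_of_finite_map (zpowers g))

theorem AddCommGroup.exists_addMonoidHom_real_ne_zero {M : Type*} [AddCommGroup M]
    [AddGroup.FG M] {m : M} (hm : ¬IsOfFinAddOrder m) : ∃ f : M →+ ℝ, f m ≠ 0 := by
  have : Module.Finite ℤ M := Module.Finite.iff_addGroup_fg.mpr ‹_›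
  let T := Submodule.torsion ℤ M
  have : Module.Free ℤ (M ⧸ T) := Module.free_of_finite_type_torsion_free'
  have hmT : T.mkQ m ≠ 0 := by
    rw [Submodule.mkQ_apply, Ne, Submodule.Quotient.mk_eq_zero, Submodule.mem_torsion_iff]
    rintro ⟨⟨n, hn⟩, hnm⟩
    exact hm (isOfFinAddOrder_iff_zsmul_eq_zero.mpr ⟨n, nonZeroDivisors.ne_zero hn, hnm⟩)
  obtain ⟨χ, hχ⟩ := Module.Projective.exists_dual_ne_zero ℤ hmT
  exact ⟨(Int.castAddHom ℝ).comp (χ ∘ₗ T.mkQ).toAddMonoidHom, by simpa using hχ⟩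

theorem CommGroup.exists_monoidHom_multiplicative_real_ne_one {M : Type*} [CommGroup M]
    [Group.FG M] {m : M} (hm : ¬IsOfFinOrder m) : ∃ f : M →* Multiplicative ℝ, f m ≠ 1 := by
  obtain ⟨f, hf⟩ := AddCommGroup.exists_addMonoidHom_real_ne_zero (M := Additive M)
    (m := .ofMul m) (by rwa [isOfFinAddOrder_ofMul_iff])
  exact ⟨AddMonoidHom.toMultiplicativeRight f, hf⟩

open scoped IsMulCommutative in
theorem VirtuallyAbelian.exists_character_ne_one {P : Type*} [Group P] [Group.FG P]
    (hP : VirtuallyAbelian P) {p : P} (hp : ¬IsOfFinOrder p) :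
    ∃ H : Subgroup P, H.FiniteIndex ∧ ∃ χ : H →* Multiplicative ℝ,
      ∃ n : ℕ, ∃ hn : p ^ n ∈ H, χ ⟨p ^ n, hn⟩ ≠ 1 := by
  obtain ⟨H, hH, hcomm⟩ := hP
  have : IsMulCommutative H := .of_setLike_mul_comm hcomm
  obtain ⟨n, hn0, -, hn⟩ := exists_pow_mem_of_index_ne_zero hH.index_ne_zero p
  have hpn : ¬IsOfFinOrder (⟨p ^ n, hn⟩ : H) := by
    rw [← Submonoid.isOfFinOrder_coe]
    simpa [isOfFinOrder_pow, hn0.ne'] using hp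
  obtain ⟨χ, hχ⟩ := CommGroup.exists_monoidHom_multiplicative_real_ne_one hpn
  exact ⟨H, hH, χ, n, hn, hχ⟩

theorem exists_real_character_of_image_infinite_general (G : Type*) [Group G]
    (A : Subgroup G) (hAvc : IsVirtuallyCyclic ↥A)
    (P : Type*) [Group P] (hPfg : Group.FG P) (hPva : VirtuallyAbelian P)
    (φ : G →* P) (himg : Infinite ↥(A.map φ)) :
    ∃ K : Subgroup G, K.FiniteIndex ∧
      ∃ ψ : ↥K →* Multiplicative ℝ,
        ∃ x : G, ∃ hx : x ∈ K ⊓ A, ψ ⟨x, hx.1⟩ ≠ 1 := by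
  obtain ⟨_, hZ, g, rfl⟩ := hAvc
  have hg : ¬IsOfFinOrder (φ g) :=
    (φ.comp A.subtype).not_isOfFinOrder_of_infinite_range
      (by rwa [MonoidHom.range_comp, range_subtype])
  obtain ⟨H, hH, χ, n, hn, hχ⟩ := hPva.exists_character_ne_one hg
  refine ⟨H.comap φ, inferInstance, χ.comp (φ.subgroupComap H),
    (g : G) ^ n, ⟨by simpa using hn, pow_mem g.2 n⟩, ?_⟩
  convert hχ using 2
  exact congrArg χ (Subtype.ext (map_pow φ (g : G) n))

/-- Let `G` be finitely generated and `A ≤ G` an infinite virtually cyclic subgroup.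
If there is a homomorphism `φ : G → P` to a finitely generated virtually abelian group
with `φ(A)` infinite, then there is a finite-index subgroup `K ≤ G` and a homomorphism
`ψ : K → ℝ` with `ψ(K ∩ A) ≠ {0}`. -/
theorem exists_real_character_of_image_infinite (G : Type*) [Group G] (hG : Group.FG G)
    (A : Subgroup G) (hAinf : Infinite ↥A) (hAvc : IsVirtuallyCyclic ↥A)
    (P : Type*) [Group P] (hPfg : Group.FG P) (hPva : VirtuallyAbelian P)
    (φ : G →* P) (himg : Infinite ↥(A.map φ)) :
    ∃ K : Subgroup G, K.FiniteIndex ∧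
      ∃ ψ : ↥K →* Multiplicative ℝ,
        ∃ x : G, ∃ hx : x ∈ K ⊓ A, ψ ⟨x, hx.1⟩ ≠ 1 :=
  exists_real_character_of_image_infinite_general G A hAvc P hPfg hPva φ himg
end
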